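/- arXiv:1703.06562 — 2 statements merged into one kernel-verified Lean document; each statement's English description precedes it below -/
import Mathlib

section
/- Let G be a group and σ ∈ G an element of order l. Let V be a nonzero finite-dimensional complex vector space and ρ : C_G(σ) → GL(V) an injective group homomorphism, with a direct sum decomposition V = ⨁_{j∈J} V_j into ρ-invariant subspaces (J finite) such that for each j there is m_j ∈ {1, …, l} with ρ(σ)v = e^{2πi m_j/l}·v on V_j. Let V* be the dual space with the contragredient action ρ*(a)f := f ∘ ρ(a)^{-1}, and for each j let W_j := {f ∈ V* : f vanishes on V_i for every i ≠ j}. Then: (a) V* = ⨁_j W_j, each W_j is invariant under every ρ*(a), and ρ*(σ) acts on W_j by the scalar e^{−2πi m_j/l}; (b) the map C_G(σ) × ℝ → GL(V ⊕ V*) sending (a, t) to the operator acting on V_j by v ↦ e^{2πi m_j t/l}·ρ(a)v and on W_j by f ↦ e^{2πi (1 − m_j/l)t}·ρ*(a)f is a group homomorphism trivial on N_σ, and the induced representation of Λ_G(σ) on V ⊕ V* is faithful (injective). -/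
/-!
Let `p_j` be the projections of `V = ⨁ V_j`. They form a complete family of orthogonal
idempotents, hence so do their transposes `p_jᵀ`, whose ranges are exactly the `W_j`; this gives
`V* = ⨁ W_j`. The operator of (b) factors as `(ρ(a) ⊕ ρ*(a)) · T(t)`, where `T(t)` acts by the
scalar `e^{w_j t}` on `V_j` and `e^{w'_j t}` on `W_j`, with `w_j = 2πi m_j/l` and
`w_j + w'_j = 2πi`. Since `ρ` preserves the pieces, `T` commutes with `ρ ⊕ ρ*`, and
`T(1) = ρ(σ) ⊕ ρ*(σ)`, so `(σ, -1)` acts trivially. Conversely, if `(a, t)` acts trivially,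
evaluating `f ∈ W_j` on `v ∈ V_j` with `f v ≠ 0` shows `e^{2πit} = 1`, so `t = n ∈ ℤ`; then
`T(n) = T(1)ⁿ = ρ(σⁿ) ⊕ ρ*(σⁿ)`, so `ρ(a σⁿ) = 1`, and faithfulness of `ρ` gives
`(a, t) = (σ, -1)⁻ⁿ ∈ N_σ`.
-/

namespace QEC

variable {G : Type*} [Group G]

/-- The centralizer of `g` in `G`. -/
abbrev Centz (g : G) : Subgroup G := Subgroup.centralizer {g}

/-- `g` as an element of its own centralizer. -/
def gC (g : G) : Centz g :=
  ⟨g, by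
    rw [Subgroup.mem_centralizer_iff]
    intro h hh
    rw [Set.mem_singleton_iff] at hh
    subst hh; rfl⟩

/-- The generator `(g, -1)` of `N_g` inside `C_G(g) × ℝ`. -/
def genN (g : G) : Centz g × Multiplicative ℝ := (gC g, Multiplicative.ofAdd (-1 : ℝ))

/-- The subgroup `N_g` of `C_G(g) × ℝ` generated by `(g, -1)`. -/
def Ng (g : G) : Subgroup (Centz g × Multiplicative ℝ) := Subgroup.zpowers (genN g)

lemma genN_mem_center (g : G) :
    genN g ∈ Subgroup.center (Centz g × Multiplicative ℝ) := by
  rw [Subgroup.mem_center_iff]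
  intro p
  have h1 : g * (p.1 : G) = (p.1 : G) * g :=
    Subgroup.mem_centralizer_iff.mp p.1.2 g (Set.mem_singleton g)
  exact Prod.ext (Subtype.ext h1.symm) (mul_comm _ _)

instance Ng_normal (g : G) : (Ng g).Normal := by
  constructor
  intro n hn x
  obtain ⟨k, rfl⟩ := Subgroup.mem_zpowers_iff.mp hn
  have hcmt : Commute x (genN g) := Subgroup.mem_center_iff.mp (genN_mem_center g) x
  have h2 : x * genN g ^ k * x⁻¹ = genN g ^ k := by
    rw [(hcmt.zpow_right k).eq, mul_inv_cancel_right]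
  rw [h2]
  exact Subgroup.zpow_mem _ (Subgroup.mem_zpowers _) k

/-- The group `Λ_G(g) = (C_G(g) × ℝ)/N_g`. -/
abbrev Lam (g : G) : Type _ := (Centz g × Multiplicative ℝ) ⧸ Ng g

/-- The class `[a, t]` in `Λ_G(g)`. -/
def lmk (g : G) (a : Centz g) (t : ℝ) : Lam g :=
  QuotientGroup.mk (a, Multiplicative.ofAdd t)

/-- The canonical map `C_G(g) → Λ_G(g)`, `a ↦ [a, 0]`. -/
def inclC (g : G) : Centz g →* Lam g :=
  (QuotientGroup.mk' (Ng g)).comp (MonoidHom.inl (Centz g) (Multiplicative ℝ))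

/-- The contragredient operator `ρ*(a) : f ↦ f ∘ ρ(a)⁻¹` on the dual space. -/
def rhoStar {G : Type*} [Group G] {g : G} {V : Type*} [AddCommGroup V] [Module ℂ V]
    (ρ : Centz g →* (Module.End ℂ V)ˣ) (a : Centz g) :
    Module.Dual ℂ V →ₗ[ℂ] Module.Dual ℂ V :=
  LinearMap.dualMap (((ρ a)⁻¹ : (Module.End ℂ V)ˣ) : Module.End ℂ V)

/-- `W_j`: the functionals vanishing on every `V_i` with `i ≠ j`. -/
def dualPiece {V : Type*} [AddCommGroup V] [Module ℂ V] {J : Type*}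
    (Vj : J → Submodule ℂ V) (j : J) : Submodule ℂ (Module.Dual ℂ V) where
  carrier := {f | ∀ i, i ≠ j → ∀ v ∈ Vj i, f v = 0}
  add_mem' := by
    intro f g hf hg i hi v hv
    simp [LinearMap.add_apply, hf i hi v hv, hg i hi v hv]
  zero_mem' := by intro i hi v hv; simp
  smul_mem' := by
    intro c f hf i hi v hv
    simp [LinearMap.smul_apply, hf i hi v hv]

end QEC

namespace CompleteOrthogonalIdempotents

section Algebra

variable {R S ι : Type*} [CommSemiring R] [Semiring S] [Algebra R S] [Fintype ι]
  {e : ι → S} (he : CompleteOrthogonalIdempotents e)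

noncomputable def diagHom : (ι → R) →* S where
  toFun c := ∑ i, c i • e i
  map_one' := by simpa using he.complete
  map_mul' c d := by
    classical
    simp only [Finset.sum_mul_sum, smul_mul_smul_comm, he.mul_eq, smul_ite, smul_zero,
      Finset.sum_ite_eq, Finset.mem_univ, if_true, Pi.mul_apply]

lemma diagHom_apply (c : ι → R) : he.diagHom c = ∑ i, c i • e i := rfl

end Algebra

section Module

variable {R M ι : Type*} [CommRing R] [AddCommGroup M] [Module R M] [Fintype ι]
  {p : ι → Module.End R M} (hp : CompleteOrthogonalIdempotents p)
include hp

lemma apply_of_mem_range_self {i : ι} {v : M} (hv : v ∈ LinearMap.range (p i)) :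
    p i v = v := by
  obtain ⟨u, rfl⟩ := hv
  exact congrArg (· u) (hp.idem i).eq

lemma apply_of_mem_range_ne {i j : ι} (hij : i ≠ j) {v : M} (hv : v ∈ LinearMap.range (p j)) :
    p i v = 0 := by
  obtain ⟨u, rfl⟩ := hv
  exact congrArg (· u) (hp.ortho hij)

lemma diagHom_apply_of_mem_range (c : ι → R) {j : ι} {v : M} (hv : v ∈ LinearMap.range (p j)) :
    hp.diagHom c v = c j • v := by
  classical
  rw [diagHom_apply, LinearMap.sum_apply, Finset.sum_eq_single j]
  · rw [LinearMap.smul_apply, hp.apply_of_mem_range_self hv]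
  · intro i _ hij
    rw [LinearMap.smul_apply, hp.apply_of_mem_range_ne hij hv, smul_zero]
  · exact fun h => absurd (Finset.mem_univ j) h

lemma sum_apply (v : M) : ∑ i, p i v = v := by
  rw [← LinearMap.sum_apply, hp.complete, Module.End.one_apply]

lemma linearMap_ext {N : Type*} [AddCommGroup N] [Module R N] {f g : M →ₗ[R] N}
    (h : ∀ i, ∀ v ∈ LinearMap.range (p i), f v = g v) : f = g := by
  ext v
  rw [← hp.sum_apply v, map_sum, map_sum]
  exact Finset.sum_congr rfl fun i _ => h i _ ⟨v, rfl⟩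

lemma commute_diagHom {T : Module.End R M}
    (hT : ∀ i, ∀ v ∈ LinearMap.range (p i), T v ∈ LinearMap.range (p i)) (c : ι → R) :
    Commute T (hp.diagHom c) :=
  hp.linearMap_ext fun i v hv => by
    simp only [Module.End.mul_apply, hp.diagHom_apply_of_mem_range c hv, map_smul,
      hp.diagHom_apply_of_mem_range c (hT i v hv)]

protected lemma dualMap : CompleteOrthogonalIdempotents fun i => (p i).dualMap where
  idem i := by
    rw [IsIdempotentElem, Module.End.mul_eq_comp, LinearMap.dualMap_comp_dualMap,
      ← Module.End.mul_eq_comp, (hp.idem i).eq]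
  ortho i j hij := by
    dsimp only
    rw [Module.End.mul_eq_comp, LinearMap.dualMap_comp_dualMap, ← Module.End.mul_eq_comp,
      hp.ortho hij.symm, LinearMap.dualMap_def, map_zero]
  complete := by
    simp only [LinearMap.dualMap_def, ← map_sum, hp.complete]
    rfl

lemma dualMap_diagHom (c : ι → R) : (hp.diagHom c).dualMap = hp.dualMap.diagHom c := by
  simp only [diagHom_apply, LinearMap.dualMap_def, map_sum, map_smul]

lemma isInternal_range [DecidableEq ι] :
    DirectSum.IsInternal fun i => LinearMap.range (p i) := by
  rw [DirectSum.isInternal_submodule_iff_iSupIndep_and_iSup_eq_top]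
  refine ⟨fun j => Submodule.disjoint_def.mpr fun v hvj hv => ?_, ?_⟩
  · have hker : (⨆ (i) (_ : i ≠ j), LinearMap.range (p i)) ≤ LinearMap.ker (p j) :=
      iSup₂_le fun i hij u hu => hp.apply_of_mem_range_ne (Ne.symm hij) hu
    rw [← hp.apply_of_mem_range_self hvj]
    exact hker hv
  · refine eq_top_iff.mpr fun v _ => ?_
    rw [← hp.sum_apply v]
    exact Submodule.sum_mem _ fun i _ => Submodule.mem_iSup_of_mem i ⟨v, rfl⟩

end Module

lemma exists_dualMap_apply_ne_zero {K V ι : Type*} [Field K] [AddCommGroup V] [Module K V]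
    [Nontrivial V] [Fintype ι] {q : ι → Module.End K V} (hq : CompleteOrthogonalIdempotents q) :
    ∃ j, ∃ v ∈ LinearMap.range (q j), ∃ f ∈ LinearMap.range (q j).dualMap, f v ≠ 0 := by
  obtain ⟨v, hv⟩ := exists_ne (0 : V)
  obtain ⟨j, -, hj⟩ := Finset.exists_ne_zero_of_sum_ne_zero (hq.sum_apply v ▸ hv)
  obtain ⟨φ, hφ⟩ := Module.Projective.exists_dual_ne_zero K hj
  refine ⟨j, q j v, ⟨v, rfl⟩, (q j).dualMap φ, ⟨φ, rfl⟩, ?_⟩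
  rwa [LinearMap.dualMap_apply, hq.apply_of_mem_range_self ⟨v, rfl⟩]

end CompleteOrthogonalIdempotents

namespace DirectSum.IsInternal

variable {R M ι : Type*} [CommRing R] [AddCommGroup M] [Module R M] [DecidableEq ι]
  {A : ι → Submodule R M} (h : IsInternal A)

noncomputable def proj (i : ι) : Module.End R M :=
  (A i).subtype ∘ₗ component R ι (fun i => A i) i ∘ₗ
    (LinearEquiv.ofBijective (coeLinearMap A) h).symm.toLinearMap

lemma proj_mem (i : ι) (v : M) : h.proj i v ∈ A i := Subtype.coe_prop _

lemma proj_of_mem {i : ι} {v : M} (hv : v ∈ A i) : h.proj i v = v :=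
  congrArg Subtype.val (h.ofBijective_coeLinearMap_of_mem hv)

lemma proj_of_mem_ne {i j : ι} (hij : i ≠ j) {v : M} (hv : v ∈ A i) : h.proj j v = 0 :=
  congrArg Subtype.val (h.ofBijective_coeLinearMap_of_mem_ne hij hv)

include h in
lemma linearMap_ext {N : Type*} [AddCommGroup N] [Module R N] {f g : M →ₗ[R] N}
    (hfg : ∀ i, ∀ v ∈ A i, f v = g v) : f = g := by
  refine LinearMap.ext_on (s := ⋃ i, (A i : Set M)) ?_ ?_
  · rw [Submodule.span_iUnion]
    simpa only [Submodule.span_eq] using h.submodule_iSup_eq_top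
  · intro v hv
    obtain ⟨i, hi⟩ := Set.mem_iUnion.mp hv
    exact hfg i v hi

lemma range_proj (i : ι) : LinearMap.range (h.proj i) = A i :=
  le_antisymm (by rintro _ ⟨v, rfl⟩; exact h.proj_mem i v) fun v hv => ⟨v, h.proj_of_mem hv⟩

lemma completeOrthogonalIdempotents_proj [Fintype ι] :
    CompleteOrthogonalIdempotents h.proj where
  idem i := LinearMap.ext fun v => h.proj_of_mem (h.proj_mem i v)
  ortho i j hij := LinearMap.ext fun v => h.proj_of_mem_ne hij.symm (h.proj_mem j v)
  complete := h.linearMap_ext fun j v hv => by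
    rw [LinearMap.sum_apply, Finset.sum_eq_single j, h.proj_of_mem hv, Module.End.one_apply]
    · exact fun i _ hij => h.proj_of_mem_ne hij.symm hv
    · exact fun hj => absurd (Finset.mem_univ j) hj

end DirectSum.IsInternal

namespace QEC

variable {G : Type*} [Group G]

section Contragredient

variable {σ : G} {V : Type*} [AddCommGroup V] [Module ℂ V]
  {J : Type*} {Vj : J → Submodule ℂ V}

lemma range_dualMap_proj [DecidableEq J] (hdec : DirectSum.IsInternal Vj) (j : J) :
    LinearMap.range (hdec.proj j).dualMap = dualPiece Vj j := by
  ext f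
  constructor
  · rintro ⟨φ, rfl⟩ i hij v hv
    rw [LinearMap.dualMap_apply, hdec.proj_of_mem_ne hij hv, map_zero]
  · intro hf
    refine ⟨f, hdec.linearMap_ext fun i v hv => ?_⟩
    rw [LinearMap.dualMap_apply]
    by_cases hij : i = j
    · subst hij
      rw [hdec.proj_of_mem hv]
    · rw [hdec.proj_of_mem_ne hij hv, map_zero, hf i hij v hv]

lemma isInternal_dualPiece [Fintype J] [DecidableEq J] (hdec : DirectSum.IsInternal Vj) :
    DirectSum.IsInternal (dualPiece Vj) := by
  simpa only [range_dualMap_proj hdec] using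
    hdec.completeOrthogonalIdempotents_proj.dualMap.isInternal_range

variable (ρ : Centz σ →* (Module.End ℂ V)ˣ)

lemma rhoStar_apply_apply (a : Centz σ) (f : Module.Dual ℂ V) (v : V) :
    rhoStar ρ a f ((ρ a : Module.End ℂ V) v) = f v := by
  rw [rhoStar, LinearMap.dualMap_apply, ← Module.End.mul_apply, Units.inv_mul,
    Module.End.one_apply]

lemma rhoStar_mem_dualPiece
    (hinv : ∀ (j : J) (a : Centz σ), ∀ v ∈ Vj j, (ρ a : Module.End ℂ V) v ∈ Vj j)
    {j : J} (a : Centz σ) {f : Module.Dual ℂ V} (hf : f ∈ dualPiece Vj j) :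
    rhoStar ρ a f ∈ dualPiece Vj j := fun i hij v hv => by
  rw [rhoStar, LinearMap.dualMap_apply, ← map_inv]
  exact hf i hij _ (hinv i a⁻¹ v hv)

noncomputable def sumDualRep : Representation ℂ (Centz σ) (V × Module.Dual ℂ V) :=
  let ρ' : Representation ℂ (Centz σ) V := (Units.coeHom _).comp ρ
  ρ'.prod ρ'.dual

lemma sumDualRep_apply (a : Centz σ) :
    sumDualRep ρ a = (ρ a : Module.End ℂ V).prodMap (rhoStar ρ a) :=
  LinearMap.ext fun x => by
    simp only [sumDualRep, Representation.prod_apply_apply, Representation.dual_apply,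
      MonoidHom.comp_apply, Units.coeHom_apply, map_inv, rhoStar, LinearMap.dualMap_def,
      LinearMap.prodMap_apply]

lemma sumDualRep_asGroupHom_injective (hρ : Function.Injective ρ) :
    Function.Injective (sumDualRep ρ).asGroupHom := fun a b hab =>
  hρ <| Units.ext <| LinearMap.ext fun v => by
    simpa [Representation.asGroupHom_apply, sumDualRep_apply] using
      congrArg Prod.fst (LinearMap.congr_fun (congrArg Units.val hab) (v, 0))

end Contragredient

section Twisted

open Complex

noncomputable def expChar {ι : Type*} (w : ι → ℂ) : Multiplicative ℝ →* (ι → ℂ) where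
  toFun t j := exp (w j * t.toAdd)
  map_one' := by ext; simp
  map_mul' s t := by ext; simp [mul_add, exp_add]

lemma expChar_ofAdd {ι : Type*} (w : ι → ℂ) (t : ℝ) :
    expChar w (Multiplicative.ofAdd t) = fun j => exp (w j * t) := rfl

variable {σ : G} {V : Type*} [AddCommGroup V] [Module ℂ V]
  {J : Type*} [Fintype J] [DecidableEq J] {Vj : J → Submodule ℂ V}
  (hdec : DirectSum.IsInternal Vj) (ρ : Centz σ →* (Module.End ℂ V)ˣ)

noncomputable def phaseRep (w w' : J → ℂ) :
    Representation ℂ (Multiplicative ℝ) (V × Module.Dual ℂ V) :=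
  let hP := hdec.completeOrthogonalIdempotents_proj
  Representation.prod (hP.diagHom.comp (expChar w)) (hP.dualMap.diagHom.comp (expChar w'))

lemma phaseRep_apply_inl (w w' : J → ℂ) (t : ℝ) {j : J} {v : V} (hv : v ∈ Vj j) :
    phaseRep hdec w w' (Multiplicative.ofAdd t) (v, 0) = (exp (w j * t) • v, 0) := by
  rw [phaseRep, Representation.prod_apply_apply, MonoidHom.comp_apply, MonoidHom.comp_apply,
    map_zero, expChar_ofAdd, CompleteOrthogonalIdempotents.diagHom_apply_of_mem_range _ _
      (by rwa [hdec.range_proj])]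

lemma phaseRep_apply_inr (w w' : J → ℂ) (t : ℝ) {j : J} {f : Module.Dual ℂ V}
    (hf : f ∈ dualPiece Vj j) :
    phaseRep hdec w w' (Multiplicative.ofAdd t) (0, f) = (0, exp (w' j * t) • f) := by
  rw [phaseRep, Representation.prod_apply_apply, MonoidHom.comp_apply, MonoidHom.comp_apply,
    map_zero, expChar_ofAdd, CompleteOrthogonalIdempotents.diagHom_apply_of_mem_range _ _
      (by rwa [range_dualMap_proj])]

variable (hinv : ∀ (j : J) (a : Centz σ), ∀ v ∈ Vj j, (ρ a : Module.End ℂ V) v ∈ Vj j)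
include hinv

lemma commute_sumDualRep_phaseRep (w w' : J → ℂ) (a : Centz σ) (t : Multiplicative ℝ) :
    Commute (sumDualRep ρ a) (phaseRep hdec w w' t) := by
  have hP := hdec.completeOrthogonalIdempotents_proj
  have hV : Commute (ρ a : Module.End ℂ V) (hP.diagHom (expChar w t)) :=
    hP.commute_diagHom (fun i v hv => by
      rw [hdec.range_proj] at hv ⊢
      exact hinv i a v hv) _
  have hD : Commute (rhoStar ρ a) (hP.dualMap.diagHom (expChar w' t)) :=
    hP.dualMap.commute_diagHom (fun i f hf => by
      rw [range_dualMap_proj] at hf ⊢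
      exact rhoStar_mem_dualPiece ρ hinv a hf) _
  rw [sumDualRep_apply]
  exact (Commute.prod (x := (_, _)) (y := (_, _)) hV hD).map (LinearMap.prodMapRingHom ℂ V _)

noncomputable def twistedRep (w w' : J → ℂ) :
    Centz σ × Multiplicative ℝ →* (Module.End ℂ (V × Module.Dual ℂ V))ˣ :=
  (sumDualRep ρ).asGroupHom.noncommCoprod (phaseRep hdec w w').asGroupHom fun a t =>
    Commute.units_of_val (commute_sumDualRep_phaseRep hdec ρ hinv w w' a t)

lemma twistedRep_apply (w w' : J → ℂ) (p : Centz σ × Multiplicative ℝ) :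
    (twistedRep hdec ρ hinv w w' p : Module.End ℂ (V × Module.Dual ℂ V))
      = sumDualRep ρ p.1 * phaseRep hdec w w' p.2 := rfl

lemma twistedRep_apply_inl (w w' : J → ℂ) (a : Centz σ) (t : ℝ) {j : J} {v : V}
    (hv : v ∈ Vj j) :
    (twistedRep hdec ρ hinv w w' (a, Multiplicative.ofAdd t)
        : Module.End ℂ (V × Module.Dual ℂ V)) (v, 0)
      = (exp (w j * t) • (ρ a : Module.End ℂ V) v, 0) := by
  rw [twistedRep_apply, Module.End.mul_apply, phaseRep_apply_inl hdec w w' t hv,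
    sumDualRep_apply, LinearMap.prodMap_apply, map_smul, map_zero]

lemma twistedRep_apply_inr (w w' : J → ℂ) (a : Centz σ) (t : ℝ) {j : J}
    {f : Module.Dual ℂ V} (hf : f ∈ dualPiece Vj j) :
    (twistedRep hdec ρ hinv w w' (a, Multiplicative.ofAdd t)
        : Module.End ℂ (V × Module.Dual ℂ V)) (0, f)
      = (0, exp (w' j * t) • rhoStar ρ a f) := by
  rw [twistedRep_apply, Module.End.mul_apply, phaseRep_apply_inr hdec w w' t hf,
    sumDualRep_apply, LinearMap.prodMap_apply, map_smul, map_zero]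

/-- On `W_j × V_j` the twist multiplies the canonical pairing by `e^{(w_j + w'_j) t}`. -/
lemma exp_two_pi_I_mul_eq_one_of_twistedRep_eq_one [Nontrivial V] {w w' : J → ℂ}
    (hw : ∀ j, w j + w' j = 2 * Real.pi * I) {a : Centz σ} {t : ℝ}
    (h : twistedRep hdec ρ hinv w w' (a, Multiplicative.ofAdd t) = 1) :
    exp (2 * Real.pi * I * t) = 1 := by
  obtain ⟨j, v, hv, f, hf, hfv⟩ :=
    hdec.completeOrthogonalIdempotents_proj.exists_dualMap_apply_ne_zero
  rw [hdec.range_proj] at hv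
  rw [range_dualMap_proj] at hf
  have hV := LinearMap.congr_fun (congrArg Units.val h) (v, 0)
  have hD := LinearMap.congr_fun (congrArg Units.val h) (0, f)
  rw [twistedRep_apply_inl hdec ρ hinv w w' a t hv, Units.val_one, Module.End.one_apply,
    Prod.mk.injEq] at hV
  rw [twistedRep_apply_inr hdec ρ hinv w w' a t hf, Units.val_one, Module.End.one_apply,
    Prod.mk.injEq] at hD
  refine (mul_eq_right₀ hfv).mp ?_
  calc exp (2 * Real.pi * I * t) * f v
      = exp (w' j * t) * exp (w j * t) * rhoStar ρ a f ((ρ a : Module.End ℂ V) v) := by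
        rw [rhoStar_apply_apply, ← exp_add, ← add_mul, add_comm, hw]
    _ = (exp (w' j * t) • rhoStar ρ a f) (exp (w j * t) • (ρ a : Module.End ℂ V) v) := by
        rw [LinearMap.smul_apply, map_smul, smul_eq_mul, smul_eq_mul]
        ring
    _ = f v := by rw [hV.1, hD.2]

end Twisted

section Sigma

open Complex

variable {σ : G} {V : Type*} [AddCommGroup V] [Module ℂ V]
  {J : Type*} [Fintype J] [DecidableEq J] {Vj : J → Submodule ℂ V}
  (hdec : DirectSum.IsInternal Vj) (ρ : Centz σ →* (Module.End ℂ V)ˣ) {w w' : J → ℂ}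
  (hσact : ∀ j, ∀ v ∈ Vj j, (ρ (gC σ) : Module.End ℂ V) v = exp (w j) • v)
include hσact

lemma diagHom_exp_eq_rho_gC :
    hdec.completeOrthogonalIdempotents_proj.diagHom (fun j => exp (w j)) = ρ (gC σ) :=
  hdec.linearMap_ext fun j v hv => by
    rw [CompleteOrthogonalIdempotents.diagHom_apply_of_mem_range _ _ (by rwa [hdec.range_proj]),
      hσact j v hv]

lemma diagHom_exp_neg_eq_rho_gC_inv :
    hdec.completeOrthogonalIdempotents_proj.diagHom (fun j => exp (-w j))
      = ↑(ρ (gC σ))⁻¹ := by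
  rw [← Units.mul_eq_one_iff_eq_inv, ← diagHom_exp_eq_rho_gC hdec ρ hσact, ← map_mul]
  convert map_one (hdec.completeOrthogonalIdempotents_proj.diagHom (R := ℂ))
  ext j
  simp [← exp_add]

lemma rhoStar_gC_eq :
    rhoStar ρ (gC σ)
      = hdec.completeOrthogonalIdempotents_proj.dualMap.diagHom (fun j => exp (-w j)) := by
  rw [rhoStar, ← diagHom_exp_neg_eq_rho_gC_inv hdec ρ hσact,
    CompleteOrthogonalIdempotents.dualMap_diagHom]

include hdec in
lemma rhoStar_gC_apply {j : J} {f : Module.Dual ℂ V} (hf : f ∈ dualPiece Vj j) :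
    rhoStar ρ (gC σ) f = exp (-w j) • f := by
  rw [rhoStar_gC_eq hdec ρ hσact,
    CompleteOrthogonalIdempotents.diagHom_apply_of_mem_range _ _ (by rwa [range_dualMap_proj])]

variable (hw : ∀ j, w j + w' j = 2 * Real.pi * I)
include hw

lemma phaseRep_ofAdd_one :
    phaseRep hdec w w' (Multiplicative.ofAdd 1) = sumDualRep ρ (gC σ) := by
  have hw' : (fun j => exp (w' j * (1 : ℝ))) = fun j => exp (-w j) := funext fun j => by
    rw [ofReal_one, mul_one, exp_eq_exp_iff_exists_int]
    exact ⟨1, by linear_combination hw j⟩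
  rw [sumDualRep_apply, rhoStar_gC_eq hdec ρ hσact, ← diagHom_exp_eq_rho_gC hdec ρ hσact, ← hw']
  simp only [phaseRep, Representation.prod, MonoidHom.coe_mk, OneHom.coe_mk,
    MonoidHom.comp_apply, expChar_ofAdd, ofReal_one, mul_one]

lemma phaseRep_asGroupHom_ofAdd_one :
    (phaseRep hdec w w').asGroupHom (Multiplicative.ofAdd 1)
      = (sumDualRep ρ).asGroupHom (gC σ) :=
  Units.ext (phaseRep_ofAdd_one hdec ρ hσact hw)

variable (hinv : ∀ (j : J) (a : Centz σ), ∀ v ∈ Vj j, (ρ a : Module.End ℂ V) v ∈ Vj j)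

lemma Ng_le_ker_twistedRep : Ng σ ≤ (twistedRep hdec ρ hinv w w').ker := by
  refine Subgroup.zpowers_le.mpr ?_
  rw [MonoidHom.mem_ker, twistedRep, MonoidHom.noncommCoprod_apply, genN, ofAdd_neg, map_inv,
    phaseRep_asGroupHom_ofAdd_one hdec ρ hσact hw, mul_inv_cancel]

lemma ker_twistedRep_le_Ng [Nontrivial V] (hρ : Function.Injective ρ) :
    (twistedRep hdec ρ hinv w w').ker ≤ Ng σ := by
  rintro ⟨a, t⟩ h
  obtain ⟨s, rfl⟩ := Multiplicative.ofAdd.surjective t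
  obtain ⟨n, hn⟩ := exp_eq_one_iff.mp
    (exp_two_pi_I_mul_eq_one_of_twistedRep_eq_one hdec ρ hinv hw h)
  obtain rfl : s = n := by
    exact_mod_cast mul_left_cancel₀ two_pi_I_ne_zero (hn.trans (mul_comm _ _))
  have hR : (sumDualRep ρ).asGroupHom (a * gC σ ^ n) = 1 := by
    rw [map_mul, map_zpow, ← phaseRep_asGroupHom_ofAdd_one hdec ρ hσact hw, ← map_zpow,
      ← ofAdd_zsmul, zsmul_one]
    exact h
  have ha : a = gC σ ^ (-n) := by
    rw [zpow_neg, eq_inv_iff_mul_eq_one]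
    exact sumDualRep_asGroupHom_injective ρ hρ (hR.trans (map_one _).symm)
  refine ⟨-n, Prod.ext ?_ ?_⟩
  · exact ha.symm
  · change Multiplicative.ofAdd (-1 : ℝ) ^ (-n) = Multiplicative.ofAdd (n : ℝ)
    rw [← ofAdd_zsmul, smul_neg, zsmul_one, Int.cast_neg, neg_neg]

end Sigma

theorem statement12_general {G : Type*} [Group G] (σ : G) (l : ℕ)
    {V : Type*} [AddCommGroup V] [Module ℂ V] [Nontrivial V]
    {J : Type*} [Fintype J] [DecidableEq J] (Vj : J → Submodule ℂ V)
    (hdec : DirectSum.IsInternal Vj)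
    (ρ : Centz σ →* (Module.End ℂ V)ˣ) (hρ : Function.Injective ρ)
    (hinv : ∀ (j : J) (a : Centz σ), ∀ v ∈ Vj j, (ρ a : Module.End ℂ V) v ∈ Vj j)
    (m : J → ℕ)
    (hσact : ∀ j, ∀ v ∈ Vj j, (ρ (gC σ) : Module.End ℂ V) v
        = Complex.exp (2 * (Real.pi : ℂ) * Complex.I * (m j : ℂ) / (l : ℂ)) • v) :
    (DirectSum.IsInternal (dualPiece Vj)
      ∧ (∀ (j : J) (a : Centz σ), ∀ f ∈ dualPiece Vj j, rhoStar ρ a f ∈ dualPiece Vj j)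
      ∧ (∀ j : J, ∀ f ∈ dualPiece Vj j,
          rhoStar ρ (gC σ) f
            = Complex.exp (-(2 * (Real.pi : ℂ) * Complex.I * (m j : ℂ) / (l : ℂ))) • f))
    ∧ ∃ F : Centz σ × Multiplicative ℝ →* (Module.End ℂ (V × Module.Dual ℂ V))ˣ,
        (∀ (a : Centz σ) (t : ℝ) (j : J),
          (∀ v ∈ Vj j,
            (F (a, Multiplicative.ofAdd t) : Module.End ℂ (V × Module.Dual ℂ V)) (v, 0)
              = (Complex.exp (2 * (Real.pi : ℂ) * Complex.I * (m j : ℂ) * (t : ℂ) / (l : ℂ))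
                  • ((ρ a : Module.End ℂ V) v), 0))
          ∧ (∀ f ∈ dualPiece Vj j,
            (F (a, Multiplicative.ofAdd t) : Module.End ℂ (V × Module.Dual ℂ V)) (0, f)
              = (0, Complex.exp (2 * (Real.pi : ℂ) * Complex.I
                      * (1 - (m j : ℂ) / (l : ℂ)) * (t : ℂ))
                  • (rhoStar ρ a f))))
        ∧ (∀ n ∈ Ng σ, F n = 1)
        ∧ ∃ ψ : Lam σ →* (Module.End ℂ (V × Module.Dual ℂ V))ˣ,
            (∀ (a : Centz σ) (t : ℝ) (j : J),
              (∀ v ∈ Vj j,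
                (ψ (lmk σ a t) : Module.End ℂ (V × Module.Dual ℂ V)) (v, 0)
                  = (Complex.exp (2 * (Real.pi : ℂ) * Complex.I * (m j : ℂ) * (t : ℂ) / (l : ℂ))
                      • ((ρ a : Module.End ℂ V) v), 0))
              ∧ (∀ f ∈ dualPiece Vj j,
                (ψ (lmk σ a t) : Module.End ℂ (V × Module.Dual ℂ V)) (0, f)
                  = (0, Complex.exp (2 * (Real.pi : ℂ) * Complex.I
                          * (1 - (m j : ℂ) / (l : ℂ)) * (t : ℂ))
                      • (rhoStar ρ a f))))
            ∧ Function.Injective ψ := by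
  have hw : ∀ j, (2 * Real.pi * Complex.I * m j / l : ℂ)
      + 2 * Real.pi * Complex.I * (1 - m j / l) = 2 * Real.pi * Complex.I := fun j => by ring
  have hN := Ng_le_ker_twistedRep hdec ρ hσact hw hinv
  refine ⟨⟨isInternal_dualPiece hdec, fun j a f hf => rhoStar_mem_dualPiece ρ hinv a hf,
      fun j f hf => rhoStar_gC_apply hdec ρ hσact hf⟩,
    twistedRep hdec ρ hinv _ _, ?_, hN, QuotientGroup.lift _ _ hN, ?_,
    (QuotientGroup.injective_lift_iff _ _ hN).mpr
      (le_antisymm hN (ker_twistedRep_le_Ng hdec ρ hσact hw hinv hρ))⟩ <;>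
  -- `ψ (lmk σ a t)` unfolds to `F (a, ofAdd t)`, so both remaining goals are the same
  exact fun a t j => ⟨fun v hv => (twistedRep_apply_inl hdec ρ hinv _ _ a t hv).trans
      (by rw [div_mul_eq_mul_div]), fun f hf => twistedRep_apply_inr hdec ρ hinv _ _ a t hf⟩

/-- With `ρ : C_G(σ) → GL(V)` faithful, `V ≠ 0` finite dimensional and
`V = ⨁_j V_j` as before, let `V*` carry the contragredient action and
`W_j = {f : f|_{V_i} = 0 for i ≠ j}`. Then (a) `V* = ⨁_j W_j`, each `W_j` is
`ρ*`-invariant and `ρ*(σ)` acts on `W_j` by `e^{−2πi m_j/l}`; (b) the operator acting on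
`V_j` by `e^{2πi m_j t/l}·ρ(a)` and on `W_j` by `e^{2πi(1 − m_j/l)t}·ρ*(a)` defines a
homomorphism `C_G(σ) × ℝ → GL(V ⊕ V*)` trivial on `N_σ`, and the induced representation
of `Λ_G(σ)` on `V ⊕ V*` is faithful. -/
theorem statement12 {G : Type*} [Group G] (σ : G) (l : ℕ)
    (hl : orderOf σ = l) (hl0 : 0 < l)
    {V : Type*} [AddCommGroup V] [Module ℂ V] [FiniteDimensional ℂ V] [Nontrivial V]
    {J : Type*} [Fintype J] [DecidableEq J] (Vj : J → Submodule ℂ V)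
    (hdec : DirectSum.IsInternal Vj)
    (ρ : Centz σ →* (Module.End ℂ V)ˣ) (hρ : Function.Injective ρ)
    (hinv : ∀ (j : J) (a : Centz σ), ∀ v ∈ Vj j, (ρ a : Module.End ℂ V) v ∈ Vj j)
    (m : J → ℕ) (hm : ∀ j, 1 ≤ m j ∧ m j ≤ l)
    (hσact : ∀ j, ∀ v ∈ Vj j, (ρ (gC σ) : Module.End ℂ V) v
        = Complex.exp (2 * (Real.pi : ℂ) * Complex.I * (m j : ℂ) / (l : ℂ)) • v) :
    (DirectSum.IsInternal (dualPiece Vj)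
      ∧ (∀ (j : J) (a : Centz σ), ∀ f ∈ dualPiece Vj j, rhoStar ρ a f ∈ dualPiece Vj j)
      ∧ (∀ j : J, ∀ f ∈ dualPiece Vj j,
          rhoStar ρ (gC σ) f
            = Complex.exp (-(2 * (Real.pi : ℂ) * Complex.I * (m j : ℂ) / (l : ℂ))) • f))
    ∧ ∃ F : Centz σ × Multiplicative ℝ →* (Module.End ℂ (V × Module.Dual ℂ V))ˣ,
        (∀ (a : Centz σ) (t : ℝ) (j : J),
          (∀ v ∈ Vj j,
            (F (a, Multiplicative.ofAdd t) : Module.End ℂ (V × Module.Dual ℂ V)) (v, 0)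
              = (Complex.exp (2 * (Real.pi : ℂ) * Complex.I * (m j : ℂ) * (t : ℂ) / (l : ℂ))
                  • ((ρ a : Module.End ℂ V) v), 0))
          ∧ (∀ f ∈ dualPiece Vj j,
            (F (a, Multiplicative.ofAdd t) : Module.End ℂ (V × Module.Dual ℂ V)) (0, f)
              = (0, Complex.exp (2 * (Real.pi : ℂ) * Complex.I
                      * (1 - (m j : ℂ) / (l : ℂ)) * (t : ℂ))
                  • (rhoStar ρ a f))))
        ∧ (∀ n ∈ Ng σ, F n = 1)
        ∧ ∃ ψ : Lam σ →* (Module.End ℂ (V × Module.Dual ℂ V))ˣ,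
            (∀ (a : Centz σ) (t : ℝ) (j : J),
              (∀ v ∈ Vj j,
                (ψ (lmk σ a t) : Module.End ℂ (V × Module.Dual ℂ V)) (v, 0)
                  = (Complex.exp (2 * (Real.pi : ℂ) * Complex.I * (m j : ℂ) * (t : ℂ) / (l : ℂ))
                      • ((ρ a : Module.End ℂ V) v), 0))
              ∧ (∀ f ∈ dualPiece Vj j,
                (ψ (lmk σ a t) : Module.End ℂ (V × Module.Dual ℂ V)) (0, f)
                  = (0, Complex.exp (2 * (Real.pi : ℂ) * Complex.I
                          * (1 - (m j : ℂ) / (l : ℂ)) * (t : ℂ))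
                      • (rhoStar ρ a f))))
            ∧ Function.Injective ψ :=
  statement12_general σ l Vj hdec ρ hρ hinv m hσact

end QEC
end

section
/- Let G be a group, H ≤ G a subgroup, X an H-set, and τ ∈ H an element of finite order. Regard Λ_H(τ) as a subgroup of Λ_G(τ) via the injective homomorphism [a, t] ↦ [a, t], and let Λ_H(τ) act on X^τ by [c, s]·x := c·x. Then the map C_G(τ) ×_{C_H(τ)} X^τ → Λ_G(τ) ×_{Λ_H(τ)} X^τ sending the class [a, x] to the class [[a, 0], x] is a well-defined bijection, where Λ_G(τ) ×_{Λ_H(τ)} X^τ denotes the quotient of Λ_G(τ) × X^τ by (αβ, x) ∼ (α, β·x) for β ∈ Λ_H(τ). -/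
namespace QEC

variable {G : Type*} [Group G]

/-- The balanced-product relation on `Γ × X`: `(γ·ι(s), x) ∼ (γ, s • x)`. -/
def balSetoid (Γ : Type*) [Group Γ] {S : Type*} [Group S] (ι : S →* Γ)
    (X : Type*) [MulAction S X] : Setoid (Γ × X) where
  r p q := ∃ s : S, p.1 = q.1 * ι s ∧ q.2 = s • p.2
  iseqv := by
    constructor
    · intro p
      exact ⟨1, by simp, by simp⟩
    · rintro p q ⟨s, h1, h2⟩
      refine ⟨s⁻¹, ?_, ?_⟩
      · rw [h1, map_inv, mul_assoc, mul_inv_cancel, mul_one]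
      · rw [h2, inv_smul_smul]
    · rintro p q r ⟨s, h1, h2⟩ ⟨u, h3, h4⟩
      refine ⟨u * s, ?_, ?_⟩
      · rw [h1, h3, map_mul, mul_assoc]
      · rw [h4, h2, mul_smul]

/-- The balanced product `Γ ×_S X` with respect to `ι : S → Γ` and an `S`-action on `X`. -/
def Bal (Γ : Type*) [Group Γ] {S : Type*} [Group S] (ι : S →* Γ)
    (X : Type*) [MulAction S X] : Type _ :=
  Quotient (balSetoid Γ ι X)

/-- The class of `(γ, x)` in the balanced product. -/
def balMk (Γ : Type*) [Group Γ] {S : Type*} [Group S] (ι : S →* Γ)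
    (X : Type*) [MulAction S X] : Γ × X → Bal Γ ι X :=
  Quotient.mk (balSetoid Γ ι X)

/-- Left translation by `g : Γ` on the balanced product. -/
def balSmul {Γ : Type*} [Group Γ] {S : Type*} [Group S] {ι : S →* Γ}
    {X : Type*} [MulAction S X] (g : Γ) : Bal Γ ι X → Bal Γ ι X :=
  Quotient.map (fun p => (g * p.1, p.2)) (by
    rintro p q ⟨s, h1, h2⟩
    exact ⟨s, by show g * p.1 = g * q.1 * ι s; rw [h1, mul_assoc], h2⟩)

/-- The fixed points `X^τ` of `τ ∈ H` acting on the `H`-set `X`. -/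
abbrev Xfix {G : Type*} [Group G] (H : Subgroup G) (X : Type*) [MulAction H X]
    (τ : H) : Type _ :=
  {x : X // τ • x = x}

/-- `C_H(τ)` viewed as the subgroup of `C_G(τ)` of elements lying in `H`. -/
def CHsub {G : Type*} [Group G] (H : Subgroup G) (τ : H) :
    Subgroup (Centz ((τ : G))) :=
  H.subgroupOf (Centz ((τ : G)))

/-- An element of `C_H(τ)`, as an element of `H`. -/
def CHsub.toH {G : Type*} [Group G] {H : Subgroup G} {τ : H}
    (s : CHsub H τ) : H :=
  ⟨((s : Centz ((τ : G))) : G), (Subgroup.mem_subgroupOf).mp s.2⟩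

lemma CHsub.toH_comm {G : Type*} [Group G] {H : Subgroup G} {τ : H}
    (s : CHsub H τ) : τ * CHsub.toH s = CHsub.toH s * τ := by
  apply Subtype.ext
  exact Subgroup.mem_centralizer_iff.mp (s : Centz ((τ : G))).2 (τ : G) (Set.mem_singleton _)

instance fixMulAction {G : Type*} [Group G] (H : Subgroup G) (X : Type*) [MulAction H X]
    (τ : H) : MulAction (CHsub H τ) (Xfix H X τ) where
  smul s x := ⟨CHsub.toH s • x.1, by
    calc (τ : H) • (CHsub.toH s • x.1) = (τ * CHsub.toH s) • x.1 := (mul_smul _ _ _).symm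
      _ = (CHsub.toH s * τ) • x.1 := by rw [CHsub.toH_comm]
      _ = CHsub.toH s • ((τ : H) • x.1) := mul_smul _ _ _
      _ = CHsub.toH s • x.1 := by rw [x.2]⟩
  one_smul x := Subtype.ext (one_smul H x.1)
  mul_smul s u x := Subtype.ext (mul_smul (CHsub.toH s) (CHsub.toH u) x.1)

/-- A group homomorphism `φ : G → H` maps `C_G(τ)` into `C_H(φ(τ))`. -/
def centMap {G H : Type*} [Group G] [Group H] (φ : G →* H) (τ : G) :
    Centz τ →* Centz (φ τ) :=
  (φ.comp (Centz τ).subtype).codRestrict _ (fun a => by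
    rw [Subgroup.mem_centralizer_iff]
    intro y hy
    rw [Set.mem_singleton_iff] at hy
    subst hy
    have h := Subgroup.mem_centralizer_iff.mp a.2 τ (Set.mem_singleton τ)
    show φ τ * φ (a : G) = φ (a : G) * φ τ
    rw [← map_mul, ← map_mul, h])

/-- The induced homomorphism `C_G(τ) × ℝ → C_H(φ(τ)) × ℝ`. -/
def CRmap {G H : Type*} [Group G] [Group H] (φ : G →* H) (τ : G) :
    Centz τ × Multiplicative ℝ →* Centz (φ τ) × Multiplicative ℝ :=
  (centMap φ τ).prodMap (MonoidHom.id (Multiplicative ℝ))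

lemma CRmap_genN {G H : Type*} [Group G] [Group H] (φ : G →* H) (τ : G) :
    CRmap φ τ (genN τ) = genN (φ τ) := by
  apply Prod.ext
  · exact Subtype.ext rfl
  · rfl

/-- The induced homomorphism `φ_Λ : Λ_G(τ) → Λ_H(φ(τ))`, `[a, t] ↦ [φ(a), t]`. -/
def LamMap {G H : Type*} [Group G] [Group H] (φ : G →* H) (τ : G) :
    Lam τ →* Lam (φ τ) :=
  QuotientGroup.map (Ng τ) (Ng (φ τ)) (CRmap φ τ) (by
    intro x hx
    obtain ⟨k, rfl⟩ := Subgroup.mem_zpowers_iff.mp hx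
    rw [Subgroup.mem_comap, map_zpow, CRmap_genN]
    exact Subgroup.zpow_mem _ (Subgroup.mem_zpowers _) k)

instance lamFixMulAction {G : Type*} [Group G] (H : Subgroup G) (X : Type*)
    [MulAction H X] (τ : H) : MulAction (Lam (G := H) τ) (Xfix H X τ) where
  smul q x := Quotient.liftOn' q
    (fun p => (⟨((p.1 : Centz (G := H) τ) : H) • x.1, by
      have hc : τ * (p.1 : H) = (p.1 : H) * τ :=
        Subgroup.mem_centralizer_iff.mp p.1.2 τ (Set.mem_singleton _)
      calc τ • ((p.1 : H) • x.1) = (τ * (p.1 : H)) • x.1 := (mul_smul _ _ _).symm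
        _ = ((p.1 : H) * τ) • x.1 := by rw [hc]
        _ = (p.1 : H) • (τ • x.1) := mul_smul _ _ _
        _ = (p.1 : H) • x.1 := by rw [x.2]⟩ : Xfix H X τ))
    (by
      intro p₁ p₂ hp
      rw [QuotientGroup.leftRel_apply] at hp
      obtain ⟨k, hk⟩ := Subgroup.mem_zpowers_iff.mp hp
      have hp₂ : p₂ = p₁ * genN τ ^ k := by rw [hk, mul_inv_cancel_left]
      have h1 : (genN τ ^ k).1 = gC τ ^ k := map_zpow (MonoidHom.fst _ _) (genN τ) k
      have hfst : (p₂.1 : H) = (p₁.1 : H) * (τ : H) ^ k := by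
        rw [hp₂, Prod.fst_mul, h1, Subgroup.coe_mul, SubgroupClass.coe_zpow]
        rfl
      apply Subtype.ext
      show (p₁.1 : H) • x.1 = (p₂.1 : H) • x.1
      rw [hfst, mul_smul]
      have hst : τ ∈ MulAction.stabilizer H x.1 := x.2
      have h2 : (τ : H) ^ k • x.1 = x.1 :=
        MulAction.mem_stabilizer_iff.mp (Subgroup.zpow_mem _ hst k)
      rw [h2])
  one_smul x := Subtype.ext (one_smul H x.1)
  mul_smul q q' x := by
    induction q using Quotient.inductionOn' with
    | h p =>
      induction q' using Quotient.inductionOn' with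
      | h p' => exact Subtype.ext (mul_smul ((p.1 : Centz (G := H) τ) : H) _ _)

/-! Since `[a, t] = [a, 0] · [1, t]` and `[1, t] ∈ Λ_H(τ)` acts trivially on `X^τ`, every class
`[[a, t], x]` is `[[a, 0], x]`, so the map is onto. If `[[a, 0], x] = [[b, 0], y]`, then
`[a, 0] = [b c, s]` with `[c, s] ∈ Λ_H(τ)` and `y = c • x`; comparing in `C_G(τ) × ℝ` gives
`a = b c τ⁻ᵏ` for some `k : ℤ`, and `c τ⁻ᵏ ∈ C_H(τ)` sends `x` to `c • x` because `τ` fixes `x`. -/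

lemma genN_zpow (g : G) (k : ℤ) :
    genN g ^ k = (gC g ^ k, Multiplicative.ofAdd (-k : ℝ)) := by
  simp [genN, Prod.pow_def, ← ofAdd_zsmul]

lemma lmk_surjective (g : G) (α : Lam g) : ∃ a t, lmk g a t = α := by
  obtain ⟨⟨a, t⟩, rfl⟩ := QuotientGroup.mk_surjective α
  exact ⟨a, t.toAdd, rfl⟩

lemma lmk_eq_lmk_iff (g : G) {a b : Centz g} {t u : ℝ} :
    lmk g a t = lmk g b u ↔ ∃ k : ℤ, b = a * gC g ^ k ∧ u = t - k := by
  rw [lmk, lmk, QuotientGroup.eq, Ng, Subgroup.mem_zpowers_iff]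
  simp only [genN_zpow, Prod.ext_iff, Prod.fst_mul, Prod.snd_mul, Prod.fst_inv, Prod.snd_inv]
  refine exists_congr fun k => and_congr ?_ ?_
  · rw [eq_inv_mul_iff_mul_eq, eq_comm]
  · rw [eq_inv_mul_iff_mul_eq, eq_comm, ← ofAdd_add, EmbeddingLike.apply_eq_iff_eq,
      ← sub_eq_add_neg]

lemma balMk_eq_balMk_iff (Γ : Type*) [Group Γ] {S : Type*} [Group S] (ι : S →* Γ)
    (X : Type*) [MulAction S X] {p q : Γ × X} :
    balMk Γ ι X p = balMk Γ ι X q ↔ ∃ s : S, p.1 = q.1 * ι s ∧ q.2 = s • p.2 :=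
  Quotient.eq

lemma balMk_surjective (Γ : Type*) [Group Γ] {S : Type*} [Group S] (ι : S →* Γ)
    (X : Type*) [MulAction S X] : Function.Surjective (balMk Γ ι X) :=
  Quotient.mk_surjective

section FixedPoints

variable {H : Subgroup G} {X : Type*} [MulAction H X] {τ : H}

def toCHsub : Centz (G := H) τ →* CHsub H τ :=
  (centMap H.subtype τ).codRestrict (CHsub H τ) fun c => Subgroup.mem_subgroupOf.mpr c.1.2

lemma coe_toCHsub_gC : (toCHsub (gC τ) : Centz (τ : G)) = gC (τ : G) := rfl

lemma toCHsub_surjective : Function.Surjective (toCHsub (H := H) (τ := τ)) :=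
  fun s =>
    ⟨⟨CHsub.toH s, Subgroup.mem_centralizer_singleton_iff.mpr (CHsub.toH_comm s).symm⟩, rfl⟩

lemma toCHsub_smul (c : Centz (G := H) τ) (x : Xfix H X τ) :
    toCHsub c • x = lmk τ c 0 • x := rfl

lemma lmk_smul_eq_lmk_smul (c : Centz (G := H) τ) (t u : ℝ) (x : Xfix H X τ) :
    lmk τ c t • x = lmk τ c u • x := rfl

lemma balMk_lmk_eq_balMk_lmk_iff {a b : Centz (τ : G)} {t u : ℝ} {x y : Xfix H X τ} :
    balMk (Lam (τ : G)) (LamMap H.subtype τ) (Xfix H X τ) (lmk (τ : G) a t, x)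
        = balMk (Lam (τ : G)) (LamMap H.subtype τ) (Xfix H X τ) (lmk (τ : G) b u, y) ↔
      ∃ (c : Centz (G := H) τ) (s : ℝ),
        lmk (τ : G) a t = lmk (τ : G) (b * toCHsub c) (u + s) ∧ y = lmk τ c s • x := by
  refine (balMk_eq_balMk_iff _ _ _).trans ⟨?_, fun ⟨c, s, hab, hxy⟩ => ⟨lmk τ c s, hab, hxy⟩⟩
  rintro ⟨β, hab, hxy⟩
  obtain ⟨c, s, rfl⟩ := lmk_surjective _ β
  exact ⟨c, s, hab, hxy⟩

lemma balMk_lmk_zero_eq_of_rel {p q : Centz (τ : G) × Xfix H X τ}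
    (h : (balSetoid (Centz (τ : G)) (CHsub H τ).subtype (Xfix H X τ)).r p q) :
    balMk (Lam (τ : G)) (LamMap H.subtype τ) (Xfix H X τ) (lmk (τ : G) p.1 0, p.2)
      = balMk (Lam (τ : G)) (LamMap H.subtype τ) (Xfix H X τ) (lmk (τ : G) q.1 0, q.2) := by
  obtain ⟨s, hp, hq⟩ := h
  obtain ⟨c, rfl⟩ := toCHsub_surjective s
  exact balMk_lmk_eq_balMk_lmk_iff.mpr ⟨c, 0, by rw [hp, add_zero]; rfl, hq⟩

variable (H X τ)

def balLamMap :
    Bal (Centz (τ : G)) (CHsub H τ).subtype (Xfix H X τ)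
      → Bal (Lam (τ : G)) (LamMap H.subtype τ) (Xfix H X τ) :=
  Quotient.lift (fun p => balMk _ _ _ (lmk (τ : G) p.1 0, p.2))
    fun _ _ => balMk_lmk_zero_eq_of_rel

lemma balLamMap_balMk (a : Centz (τ : G)) (x : Xfix H X τ) :
    balLamMap H X τ (balMk _ _ _ (a, x)) = balMk _ _ _ (lmk (τ : G) a 0, x) := rfl

lemma balLamMap_surjective : Function.Surjective (balLamMap H X τ) := by
  intro u
  obtain ⟨⟨α, x⟩, rfl⟩ := balMk_surjective _ _ _ u
  obtain ⟨a, t, rfl⟩ := lmk_surjective _ α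
  refine ⟨balMk _ _ _ (a, x), balMk_lmk_eq_balMk_lmk_iff.mpr ⟨1, -t, ?_, ?_⟩⟩
  · rw [map_one, OneMemClass.coe_one, mul_one, add_neg_cancel]
  · exact (one_smul (Lam (G := H) τ) x).symm

lemma balLamMap_injective : Function.Injective (balLamMap H X τ) := by
  intro u v huv
  obtain ⟨⟨a, x⟩, rfl⟩ := balMk_surjective _ _ _ u
  obtain ⟨⟨b, y⟩, rfl⟩ := balMk_surjective _ _ _ v
  rw [balLamMap_balMk, balLamMap_balMk] at huv
  obtain ⟨c, t, hab, rfl⟩ := balMk_lmk_eq_balMk_lmk_iff.mp huv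
  obtain ⟨k, hbc, -⟩ := (lmk_eq_lmk_iff _).mp hab
  refine (balMk_eq_balMk_iff _ _ _).mpr ⟨toCHsub (c * (gC τ ^ k)⁻¹), ?_, ?_⟩
  · rw [Subgroup.subtype_apply, map_mul, map_inv, map_zpow, Subgroup.coe_mul, Subgroup.coe_inv,
      Subgroup.coe_zpow, coe_toCHsub_gC, ← mul_assoc, hbc, mul_inv_cancel_right]
  · -- `τ` fixes `X^τ` because `[τ, 0] = [1, 1]` in `Λ_H(τ)` and the action ignores the real part.
    have hc : lmk τ (c * (gC τ ^ k)⁻¹) 0 = lmk τ c (-k) :=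
      (lmk_eq_lmk_iff τ).mpr ⟨k, by group, by ring⟩
    rw [toCHsub_smul, hc, lmk_smul_eq_lmk_smul]

end FixedPoints

theorem statement15_general {G : Type*} [Group G] (H : Subgroup G) (X : Type*) [MulAction H X]
    (τ : H) :
    ∃ f : Bal (Centz ((τ : G))) (CHsub H τ).subtype (Xfix H X τ)
        → Bal (Lam ((τ : G))) (LamMap H.subtype τ) (Xfix H X τ),
      (∀ (a : Centz ((τ : G))) (x : Xfix H X τ),
        f (balMk (Centz ((τ : G))) (CHsub H τ).subtype (Xfix H X τ) (a, x))
          = balMk (Lam ((τ : G))) (LamMap H.subtype τ) (Xfix H X τ) (lmk ((τ : G)) a 0, x))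
      ∧ Function.Bijective f :=
  ⟨balLamMap H X τ, balLamMap_balMk H X τ, balLamMap_injective H X τ, balLamMap_surjective H X τ⟩

/-- For `H ≤ G`, an `H`-set `X` and `τ ∈ H` of finite order, regard
`Λ_H(τ)` inside `Λ_G(τ)` via `[a, t] ↦ [a, t]`, acting on `X^τ` by `[c, s] • x = c • x`.
Then `C_G(τ) ×_{C_H(τ)} X^τ → Λ_G(τ) ×_{Λ_H(τ)} X^τ`, `[a, x] ↦ [[a, 0], x]`,
is a well-defined bijection. -/
theorem statement15 {G : Type*} [Group G] (H : Subgroup G) (X : Type*) [MulAction H X]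
    (τ : H) (hτ : IsOfFinOrder τ) :
    ∃ f : Bal (Centz ((τ : G))) (CHsub H τ).subtype (Xfix H X τ)
        → Bal (Lam ((τ : G))) (LamMap H.subtype τ) (Xfix H X τ),
      (∀ (a : Centz ((τ : G))) (x : Xfix H X τ),
        f (balMk (Centz ((τ : G))) (CHsub H τ).subtype (Xfix H X τ) (a, x))
          = balMk (Lam ((τ : G))) (LamMap H.subtype τ) (Xfix H X τ) (lmk ((τ : G)) a 0, x))
      ∧ Function.Bijective f :=
  statement15_general H X τ

end QEC
end
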